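/- arXiv:1503.01008 — 2 statements merged into one kernel-verified Lean document; each statement's English description precedes it below -/
import Mathlib

section
/- If G^c is a connected vertex-coloured graph on n vertices with c colours and n > c ≥ 1, then γᵗ(G^c) ≤ (n + c − 1)/2. -/
/-- `S` is a dominating set of `G`: every vertex is in `S` or has a neighbour in `S`. -/
def IsDomSet {V : Type*} (G : SimpleGraph V) (S : Finset V) : Prop :=
  ∀ v : V, v ∈ S ∨ ∃ u ∈ S, G.Adj u v

/-- `S` is tropical w.r.t. the colouring `col`: every colour appears on a vertex of `S`. -/
def IsTropical {V C : Type*} (col : V → C) (S : Finset V) : Prop :=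
  ∀ ch : C, ∃ v ∈ S, col v = ch

/-- The tropical domination number: the least size of a tropical dominating set. -/
noncomputable def tropDomNum {V C : Type*} (G : SimpleGraph V) (col : V → C) : ℕ :=
  sInf {k : ℕ | ∃ S : Finset V, IsDomSet G S ∧ IsTropical col S ∧ S.card = k}

/-!
Split the vertices by the parity of their distance from a root: in a connected graph with at
least two vertices both parts `A` and `Aᶜ` are dominating. Completing a dominating set `S` by one
vertex of each missing colour gives `γᵗ ≤ c + (|S| - |col S|)`, and summing this over `A` and `Aᶜ`
gives `2γᵗ ≤ n + 2c - |col A| - |col Aᶜ|`. This is already enough unless `A` and `Aᶜ` use disjoint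
sets of colours and have the same excess `|S| - |col S|`. In that tight case the excess of `A`
is positive because `n > c`, and an exchange between a vertex of `A` of repeated colour and its
private neighbours in `Aᶜ` produces a dominating set of strictly smaller excess.
-/
open Finset

section

variable {V C : Type*}

lemma IsDomSet.mono {G : SimpleGraph V} {S T : Finset V} (hS : IsDomSet G S) (hST : S ⊆ T) :
    IsDomSet G T := fun v =>
  (hS v).imp (fun hv => hST hv) fun ⟨u, hu, huv⟩ => ⟨u, hST hu, huv⟩

lemma tropDomNum_le_card {G : SimpleGraph V} {col : V → C} {S : Finset V} (hdom : IsDomSet G S)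
    (htrop : IsTropical col S) : tropDomNum G col ≤ #S :=
  Nat.sInf_le ⟨S, hdom, htrop, rfl⟩

def colourExcess [DecidableEq C] (col : V → C) (S : Finset V) : ℕ :=
  #S - #(S.image col)

lemma colourExcess_add_card_image [DecidableEq C] (col : V → C) (S : Finset V) :
    colourExcess col S + #(S.image col) = #S :=
  Nat.sub_add_cancel card_image_le

/-- Adding one representative of each missing colour makes a dominating set tropical. -/
lemma tropDomNum_le_card_add_colourExcess [Fintype C] [DecidableEq V] [DecidableEq C]
    {G : SimpleGraph V} {col : V → C} (hsurj : Function.Surjective col) {S : Finset V}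
    (hdom : IsDomSet G S) : tropDomNum G col ≤ Fintype.card C + colourExcess col S := by
  set M := univ \ S.image col
  set R := M.image (Function.surjInv hsurj)
  have htrop : IsTropical col (S ∪ R) := by
    intro ch
    by_cases hch : ch ∈ S.image col
    · obtain ⟨v, hv, rfl⟩ := mem_image.mp hch
      exact ⟨v, mem_union_left _ hv, rfl⟩
    · refine ⟨Function.surjInv hsurj ch, mem_union_right _ ?_, Function.surjInv_eq hsurj ch⟩
      exact mem_image_of_mem _ (by simp [M, hch])
  have hM : #M = Fintype.card C - #(S.image col) := by
    rw [card_sdiff_of_subset (subset_univ _), card_univ]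
  have hR : #R ≤ #M := card_image_le
  have hSC : #(S.image col) ≤ Fintype.card C := card_le_univ _
  calc tropDomNum G col ≤ #(S ∪ R) := tropDomNum_le_card (hdom.mono subset_union_left) htrop
    _ ≤ #S + #R := card_union_le S R
    _ ≤ Fintype.card C + colourExcess col S := by
      have hexS := colourExcess_add_card_image col S
      omega

lemma card_add_card_inter_image_compl [Fintype V] [Fintype C] [DecidableEq V] [DecidableEq C]
    {col : V → C} (hsurj : Function.Surjective col) (A : Finset V) :
    Fintype.card C + #(A.image col ∩ Aᶜ.image col) = #(A.image col) + #(Aᶜ.image col) := by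
  rw [← card_union_add_card_inter, ← image_union, union_compl, image_univ_of_surjective hsurj,
    card_univ]

namespace SimpleGraph

variable {G : SimpleGraph V}

lemma Connected.exists_adj_even_dist_iff_not [Nontrivial V] (hG : G.Connected) (r x : V) :
    ∃ w, G.Adj w x ∧ (Even (G.dist r w) ↔ ¬Even (G.dist r x)) := by
  by_cases hx : x = r
  · subst hx
    obtain ⟨w, hxw⟩ := hG.preconnected.exists_adj_of_nontrivial x
    exact ⟨w, hxw.symm, by simp [dist_eq_one_iff_adj.mpr hxw]⟩
  · obtain ⟨p, hp⟩ := hG.exists_walk_length_eq_dist x r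
    have hp_nil : ¬p.Nil := p.not_nil_of_ne hx
    have hle : G.dist p.snd r + 1 ≤ G.dist x r :=
      hp ▸ p.length_tail_add_one hp_nil ▸ Nat.add_le_add_right (dist_le p.tail) 1
    have hge : G.dist x r ≤ G.dist x p.snd + G.dist p.snd r := hG.dist_triangle
    rw [dist_eq_one_iff_adj.mpr (p.adj_snd hp_nil)] at hge
    refine ⟨p.snd, (p.adj_snd hp_nil).symm, ?_⟩
    have hdist : G.dist r x = G.dist r p.snd + 1 := by
      rw [dist_comm, dist_comm (u := r)]; omega
    rw [hdist, Nat.even_add_one, not_not]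

/-- The vertices at even and at odd distance from a fixed root dominate each other. -/
lemma Connected.exists_isDomSet_and_isDomSet_compl [Fintype V] [DecidableEq V] [Nontrivial V]
    (hG : G.Connected) : ∃ A : Finset V, IsDomSet G A ∧ IsDomSet G Aᶜ := by
  obtain ⟨r⟩ := ‹Nontrivial V›.to_nonempty
  set A := univ.filter fun x => Even (G.dist r x)
  refine ⟨A, fun x => ?_, fun x => ?_⟩ <;>
    obtain ⟨w, hwx, hw⟩ := hG.exists_adj_even_dist_iff_not r x <;>
    by_cases hx : Even (G.dist r x)
  · exact Or.inl (by simpa [A] using hx)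
  · exact Or.inr ⟨w, by simpa [A] using hw.mpr hx, hwx⟩
  · exact Or.inr ⟨w, by simpa [A] using mt hw.mp (not_not.mpr hx), hwx⟩
  · exact Or.inl (by simpa [A] using hx)

end SimpleGraph

section Exchange

variable [DecidableEq V] [DecidableEq C] {G : SimpleGraph V} {col : V → C} {A Q : Finset V}
  {u v y z : V}

lemma isDomSet_erase_union (hvQ : ∃ w ∈ Q, G.Adj w v)
    (hQ : ∀ x ∉ A, x ∉ Q → ∃ w ∈ A, w ≠ v ∧ G.Adj w x) : IsDomSet G (A.erase v ∪ Q) := by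
  intro x
  by_cases hxv : x = v
  · obtain ⟨w, hw, hwv⟩ := hvQ
    exact Or.inr ⟨w, mem_union_right _ hw, hxv ▸ hwv⟩
  by_cases hxA : x ∈ A
  · exact Or.inl (mem_union_left _ (mem_erase.mpr ⟨hxv, hxA⟩))
  by_cases hxQ : x ∈ Q
  · exact Or.inl (mem_union_right _ hxQ)
  obtain ⟨w, hw, hwv, hwx⟩ := hQ x hxA hxQ
  exact Or.inr ⟨w, mem_union_left _ (mem_erase.mpr ⟨hwv, hw⟩), hwx⟩

lemma colourExcess_erase_union_lt (hdisj : Disjoint (A.image col) (Q.image col))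
    (hinj : Set.InjOn col Q) (hu : u ∈ A) (hv : v ∈ A) (huv : u ≠ v) (hcol : col u = col v) :
    colourExcess col (A.erase v ∪ Q) < colourExcess col A := by
  set S := A.erase v ∪ Q
  have himage : A.image col ∪ Q.image col ⊆ S.image col := by
    rw [image_union]
    refine union_subset_union (fun c hc => ?_) subset_rfl
    obtain ⟨x, hx, rfl⟩ := mem_image.mp hc
    by_cases hxv : x = v
    · exact mem_image.mpr ⟨u, mem_erase.mpr ⟨huv, hu⟩, hxv ▸ hcol⟩
    · exact mem_image_of_mem col (mem_erase.mpr ⟨hxv, hx⟩)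
  have hcolS := card_le_card himage
  rw [card_union_of_disjoint hdisj, card_image_of_injOn hinj] at hcolS
  have hS : #S ≤ #(A.erase v) + #Q := card_union_le _ _
  rw [card_erase_of_mem hv] at hS
  have hA : 0 < #A := card_pos.mpr ⟨v, hv⟩
  have hexS := colourExcess_add_card_image col S
  have hexA := colourExcess_add_card_image col A
  omega

variable [Fintype V]

lemma isDomSet_insert_erase_compl (hAc : IsDomSet G Aᶜ) (hvy : G.Adj v y)
    (hy : ∀ w ∈ A, G.Adj w y → w = v) : IsDomSet G (insert v (Aᶜ.erase y)) := by
  intro x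
  by_cases hxv : x = v
  · rw [hxv]
    exact Or.inl (mem_insert_self v _)
  by_cases hxy : x = y
  · exact Or.inr ⟨v, mem_insert_self v _, hxy ▸ hvy⟩
  by_cases hxA : x ∈ A
  · obtain ⟨w, hw, hwx⟩ := (hAc x).resolve_left (notMem_compl.mpr hxA)
    have hwy : w ≠ y := fun hwy => hxv (hy x hxA (hwy ▸ hwx.symm))
    exact Or.inr ⟨w, mem_insert_of_mem (mem_erase.mpr ⟨hwy, hw⟩), hwx⟩
  · exact Or.inl (mem_insert_of_mem (mem_erase.mpr ⟨hxy, mem_compl.mpr hxA⟩))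

lemma colourExcess_insert_erase_compl_lt (hdisj : Disjoint (A.image col) (Aᶜ.image col))
    (hv : v ∈ A) (hy : y ∉ A) (hzy : z ≠ y) (hzcol : col z = col y) :
    colourExcess col (insert v (Aᶜ.erase y)) < colourExcess col Aᶜ := by
  set S := insert v (Aᶜ.erase y)
  have hz : z ∉ A := fun hz => disjoint_left.mp hdisj (mem_image_of_mem col hz)
    (hzcol ▸ mem_image_of_mem col (mem_compl.mpr hy))
  have himage : insert (col v) (Aᶜ.image col) ⊆ S.image col := by
    rw [image_insert]
    refine insert_subset_insert _ (fun c hc => ?_)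
    obtain ⟨x, hx, rfl⟩ := mem_image.mp hc
    by_cases hxy : x = y
    · exact mem_image.mpr ⟨z, mem_erase.mpr ⟨hzy, mem_compl.mpr hz⟩, hxy ▸ hzcol⟩
    · exact mem_image_of_mem col (mem_erase.mpr ⟨hxy, hx⟩)
  have hcolS := card_le_card himage
  rw [card_insert_of_notMem (disjoint_left.mp hdisj (mem_image_of_mem col hv))] at hcolS
  have hS : #S ≤ #(Aᶜ.erase y) + 1 := card_insert_le _ _
  rw [card_erase_of_mem (mem_compl.mpr hy)] at hS
  have hAc : 0 < #Aᶜ := card_pos.mpr ⟨y, mem_compl.mpr hy⟩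
  have hexS := colourExcess_add_card_image col S
  have hexAc := colourExcess_add_card_image col Aᶜ
  omega

/-- If `A` repeats a colour, say `col u = col v`, then either some private
neighbour `y` of `v` in `Aᶜ` repeats a colour, and `y` can be traded for `v` in `Aᶜ`, or the
private neighbours of `v` have distinct colours, and `v` can be traded for them in `A`. -/
lemma exists_isDomSet_colourExcess_lt (hA : IsDomSet G A) (hAc : IsDomSet G Aᶜ)
    (hdisj : Disjoint (A.image col) (Aᶜ.image col)) (hpos : 0 < colourExcess col A) :
    ∃ S, IsDomSet G S ∧
      (colourExcess col S < colourExcess col A ∨ colourExcess col S < colourExcess col Aᶜ) := by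
  classical
  obtain ⟨u, hu, v, hv, huv, hcol⟩ := exists_ne_map_eq_of_card_lt_of_maps_to (t := A.image col)
    (by have := colourExcess_add_card_image col A; omega) fun a ha => mem_image_of_mem col ha
  set P := Aᶜ.filter fun y => ∀ w ∈ A, G.Adj w y → w = v
  by_cases hP : ∃ y ∈ P, ∃ z ≠ y, col z = col y
  · obtain ⟨y, hyP, z, hzy, hzcol⟩ := hP
    obtain ⟨hyA, hyv⟩ := mem_filter.mp hyP
    have hvy : G.Adj v y := by
      obtain ⟨w, hw, hwy⟩ := (hA y).resolve_left (mem_compl.mp hyA)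
      exact hyv w hw hwy ▸ hwy
    exact ⟨_, isDomSet_insert_erase_compl hAc hvy hyv,
      Or.inr (colourExcess_insert_erase_compl_lt hdisj hv (mem_compl.mp hyA) hzy hzcol)⟩
  · have hP_unique : ∀ y ∈ P, ∀ z, col z = col y → z = y := fun y hy z h =>
      by_contra fun hzy => hP ⟨y, hy, z, hzy, h⟩
    obtain ⟨w₀, hw₀, hw₀v⟩ := (hAc v).resolve_left (notMem_compl.mpr hv)
    have hQ : insert w₀ P ⊆ Aᶜ := insert_subset hw₀ (filter_subset _ _)
    have hinj : Set.InjOn col (insert w₀ P : Finset V) := by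
      intro y₁ hy₁ y₂ hy₂ h
      simp only [coe_insert, Set.mem_insert_iff, mem_coe] at hy₁ hy₂
      rcases hy₁ with rfl | hy₁ <;> rcases hy₂ with rfl | hy₂
      · rfl
      · exact hP_unique _ hy₂ _ h
      · exact (hP_unique _ hy₁ _ h.symm).symm
      · exact hP_unique _ hy₂ _ h
    refine ⟨_, isDomSet_erase_union ⟨w₀, mem_insert_self _ _, hw₀v⟩ fun x hxA hxQ => ?_,
      Or.inl (colourExcess_erase_union_lt (hdisj.mono_right (image_subset_image hQ)) hinj
        hu hv huv hcol)⟩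
    have hxP : x ∉ P := fun h => hxQ (mem_insert_of_mem h)
    simp only [P, mem_filter, mem_compl, not_and, not_forall] at hxP
    obtain ⟨w, hw, hwx, hwv⟩ := hxP hxA
    exact ⟨w, hw, hwv, hwx⟩

end Exchange

end

/-- if `G^c` is connected with `n > c ≥ 1`, then `γᵗ(G^c) ≤ (n + c - 1)/2`. -/
theorem tropDomNum_le_of_connected
    {V C : Type*} [Fintype V] [Fintype C] (G : SimpleGraph V) (hconn : G.Connected)
    (col : V → C) (hsurj : Function.Surjective col)
    (n c : ℕ) (hn : Fintype.card V = n) (hc : Fintype.card C = c)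
    (hc1 : 1 ≤ c) (hcn : c < n) :
    2 * tropDomNum G col ≤ n + c - 1 := by
  classical
  subst hn hc
  have : Nontrivial V := Fintype.one_lt_card_iff_nontrivial.mp (by omega)
  obtain ⟨A, hA, hAc⟩ := hconn.exists_isDomSet_and_isDomSet_compl
  have hγA := tropDomNum_le_card_add_colourExcess hsurj hA
  have hγAc := tropDomNum_le_card_add_colourExcess hsurj hAc
  have hcolours := card_add_card_inter_image_compl hsurj A
  have hexA := colourExcess_add_card_image col A
  have hexAc := colourExcess_add_card_image col Aᶜ
  have hsplit := card_add_card_compl A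
  rcases Nat.eq_zero_or_pos #(A.image col ∩ Aᶜ.image col) with hinter | hinter
  · have hdisj := disjoint_iff_inter_eq_empty.mpr (card_eq_zero.mp hinter)
    by_cases heq : colourExcess col A = colourExcess col Aᶜ
    · obtain ⟨S, hS, hlt⟩ := exists_isDomSet_colourExcess_lt hA hAc hdisj (by omega)
      have hγS := tropDomNum_le_card_add_colourExcess hsurj hS
      omega
    · omega
  · omega
end

section
/- Let G^c be a connected vertex-coloured graph on n vertices with c colours and minimum degree δ ≥ 9. Then either γᵗ(G^c) = c, or γᵗ(G^c) < (δ·(n − c + 1))/(3δ − 1) + c − 1. -/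
/-!
Fix one vertex of each colour; these `c` vertices form a tropical set `R`. If `R` dominates,
`γᵗ = c`. Otherwise the vertices `w` not dominated by `R` have closed neighbourhoods of at least
`δ + 1 ≥ 10` vertices, all outside `R`, and it suffices to hit all of them with few vertices of
the `m = n - c` vertices outside `R`. Greedily choosing a vertex lying in the most closed
neighbourhoods leaves at most a `(m - 10) / m` fraction of them unhit, so by Bernoulli's inequality
at most `m (1 - t / m) ^ 10` remain after `t` steps; with `t = ⌈m / 4⌉` this yields a hitting set
of size at most `(m - 2) / 3` for `m ≥ 53`, and smaller `m` are checked by computation. Finally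
`c + (m - 2) / 3 < δ (m + 1) / (3δ - 1) + c - 1`.
-/

open Finset

theorem one_sub_div_le_div_pow {k m : ℕ} :
    1 - (k : ℝ) / (m + 1) ≤ ((m : ℝ) / (m + 1)) ^ k := by
  have hm : (0 : ℝ) < m + 1 := by positivity
  have h := one_add_mul_le_pow (a := -1 / ((m : ℝ) + 1))
    (by rw [neg_div, neg_le_neg_iff, div_le_iff₀ hm]; linarith [(m.cast_nonneg : (0 : ℝ) ≤ m)]) k
  calc 1 - (k : ℝ) / (m + 1) = 1 + k * (-1 / ((m : ℝ) + 1)) := by ring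
    _ ≤ (1 + -1 / ((m : ℝ) + 1)) ^ k := h
    _ = ((m : ℝ) / (m + 1)) ^ k := by congr 1; field_simp; ring

/-- `greedyHittingBound k m u` bounds the size of a greedily built hitting set for `u` sets of size
at least `k` in an `m`-element ground set: some element lies in at least `k u / m` of them, and after choosing it
at most `⌊(m - k) u / m⌋` sets remain, in a ground set of `m - 1` elements. -/
def greedyHittingBound (k : ℕ) : ℕ → ℕ → ℕ
  | 0, _ => 0
  | m + 1, u =>
    if u = 0 then 0
    else if m + 1 ≤ k then 1
    else 1 + greedyHittingBound k m ((m + 1 - k) * u / (m + 1))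

namespace greedyHittingBound

variable {k : ℕ}

theorem zero_right (k m : ℕ) : greedyHittingBound k m 0 = 0 := by
  cases m <;> simp [greedyHittingBound]

theorem succ_of_lt {m u : ℕ} (hu : u ≠ 0) (hk : k < m + 1) :
    greedyHittingBound k (m + 1) u =
      1 + greedyHittingBound k m ((m + 1 - k) * u / (m + 1)) := by
  simp [greedyHittingBound, hu, Nat.not_le.mpr hk]

theorem le_self (hk : 0 < k) : ∀ m u, greedyHittingBound k m u ≤ u
  | 0, _ => Nat.zero_le _
  | m + 1, u => by
    rcases Nat.eq_zero_or_pos u with rfl | hu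
    · simp [zero_right]
    rcases Nat.lt_or_ge k (m + 1) with hkm | hkm
    · rw [succ_of_lt hu.ne' hkm]
      have : (m + 1 - k) * u / (m + 1) < u :=
        Nat.div_lt_of_lt_mul (Nat.mul_lt_mul_of_pos_right (by omega) hu)
      have := le_self hk m ((m + 1 - k) * u / (m + 1))
      omega
    · simp [greedyHittingBound, hu.ne', hkm]
      omega

theorem mono (k : ℕ) : ∀ m, Monotone (greedyHittingBound k m)
  | 0 => fun _ _ _ => le_rfl
  | m + 1 => fun u v huv => by
    rcases Nat.eq_zero_or_pos u with rfl | hu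
    · simp [zero_right]
    rcases Nat.lt_or_ge k (m + 1) with hkm | hkm
    · rw [succ_of_lt hu.ne' hkm, succ_of_lt (by omega) hkm]
      exact Nat.add_le_add_left
        (mono k m (Nat.div_le_div_right (Nat.mul_le_mul_left _ huv))) 1
    · simp [greedyHittingBound, hu.ne', hkm, show v ≠ 0 by omega]

theorem le_add_mul_pow (hk : 0 < k) (t : ℕ) :
    ∀ m u, t + k < m →
      (greedyHittingBound k m u : ℝ) ≤ t + u * (((m : ℝ) - t) / m) ^ k := by
  induction t with
  | zero =>
    intro m u hm
    have hm0 : (m : ℝ) ≠ 0 := by norm_cast; omega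
    simpa [hm0] using le_self hk m u
  | succ t ih =>
    intro m u hm
    obtain ⟨m, rfl⟩ : ∃ m', m = m' + 1 := ⟨m - 1, by omega⟩
    have htm : ((t : ℝ) + 1) ≤ m := by norm_cast; omega
    rcases Nat.eq_zero_or_pos u with rfl | hu
    · simp only [zero_right, Nat.cast_zero, zero_mul, add_zero]
      positivity
    rw [succ_of_lt hu.ne' (by omega)]
    set u' := (m + 1 - k) * u / (m + 1)
    have hm0 : (0 : ℝ) < m := by norm_cast; omega
    have hu' : (u' : ℝ) ≤ u * ((m : ℝ) / (m + 1)) ^ k := calc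
      (u' : ℝ) ≤ ((m + 1 - k) * u : ℕ) / ((m + 1 : ℕ) : ℝ) := Nat.cast_div_le
      _ = u * (1 - (k : ℝ) / (m + 1)) := by
        rw [Nat.cast_mul, Nat.cast_sub (by omega)]; push_cast; field_simp
      _ ≤ u * ((m : ℝ) / (m + 1)) ^ k := by gcongr; exact one_sub_div_le_div_pow
    have hX : (0 : ℝ) ≤ (((m : ℝ) - t) / m) ^ k := by
      apply pow_nonneg; apply div_nonneg <;> linarith
    calc ((1 + greedyHittingBound k m u' : ℕ) : ℝ)
        ≤ 1 + (t + u' * (((m : ℝ) - t) / m) ^ k) := by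
          push_cast; gcongr; exact ih m u' (by omega)
      _ ≤ 1 + (t + u * ((m : ℝ) / (m + 1)) ^ k * (((m : ℝ) - t) / m) ^ k) := by gcongr
      _ = ((t + 1 : ℕ) : ℝ) + u * ((((m + 1 : ℕ) : ℝ) - (t + 1 : ℕ)) / (m + 1 : ℕ)) ^ k := by
          push_cast; rw [mul_assoc, ← mul_pow]; field_simp; ring

theorem three_mul_ten_self_add_two_le_of_lt :
    ∀ m < 53, 10 ≤ m → 3 * greedyHittingBound 10 m m + 2 ≤ m := by
  decide

theorem three_mul_ten_self_add_two_le_of_ge {m : ℕ} (hm : 53 ≤ m) :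
    3 * greedyHittingBound 10 m m + 2 ≤ m := by
  set t := (m + 3) / 4
  have hbound := le_add_mul_pow (k := 10) (by norm_num) t m m (by omega)
  have hmr : (53 : ℝ) ≤ m := by exact_mod_cast hm
  have ht : (m : ℝ) ≤ 4 * t ∧ 4 * (t : ℝ) ≤ m + 3 := by
    constructor <;> norm_cast <;> omega
  have hratio : ((m : ℝ) - t) / m ≤ 3 / 4 := by
    rw [div_le_iff₀ (by linarith)]; linarith
  have hpow : (((m : ℝ) - t) / m) ^ 10 ≤ (3 / 4) ^ 10 :=
    pow_le_pow_left₀ (div_nonneg (by linarith) (by linarith)) hratio 10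
  have : (greedyHittingBound 10 m m : ℝ) ≤ t + m * (3 / 4) ^ 10 :=
    hbound.trans (by gcongr)
  have : 3 * (greedyHittingBound 10 m m : ℝ) + 2 ≤ m := by norm_num at this ⊢; linarith
  exact_mod_cast this

theorem three_mul_ten_add_two_le {m u : ℕ} (hm : 10 ≤ m) (hu : u ≤ m) :
    3 * greedyHittingBound 10 m u + 2 ≤ m := by
  have := mono 10 m hu
  rcases Nat.lt_or_ge m 53 with h | h
  · have := three_mul_ten_self_add_two_le_of_lt m h hm; omega
  · have := three_mul_ten_self_add_two_le_of_ge h; omega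

end greedyHittingBound

section HittingSet

variable {ι α : Type*} [DecidableEq α] {N : ι → Finset α} {A : Finset α} {W : Finset ι} {k : ℕ}

theorem exists_mem_mul_le_card_mul_card_filter (hA : A.Nonempty)
    (hN : ∀ w ∈ W, N w ⊆ A ∧ k ≤ #(N w)) :
    ∃ a ∈ A, k * #W ≤ #A * #{w ∈ W | a ∈ N w} := by
  have hdouble : k * #W ≤ ∑ a ∈ A, #{w ∈ W | a ∈ N w} := calc
    k * #W = ∑ _w ∈ W, k := by rw [sum_const, smul_eq_mul, mul_comm]
    _ ≤ ∑ w ∈ W, #{a ∈ A | a ∈ N w} := sum_le_sum fun w hw => by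
      rw [filter_mem_eq_inter, inter_eq_right.mpr (hN w hw).1]; exact (hN w hw).2
    _ = ∑ a ∈ A, #{w ∈ W | a ∈ N w} :=
      (sum_card_bipartiteAbove_eq_sum_card_bipartiteBelow (fun a w => a ∈ N w)).symm
  refine exists_le_of_sum_le hA ?_
  rw [sum_const, smul_eq_mul, ← mul_sum]
  exact Nat.mul_le_mul_left _ hdouble

theorem exists_mem_card_filter_notMem_le (hA : A.Nonempty)
    (hN : ∀ w ∈ W, N w ⊆ A ∧ k ≤ #(N w)) :
    ∃ a ∈ A, #{w ∈ W | a ∉ N w} ≤ (#A - k) * #W / #A := by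
  obtain ⟨a, haA, ha⟩ := exists_mem_mul_le_card_mul_card_filter hA hN
  refine ⟨a, haA, ?_⟩
  rw [Nat.le_div_iff_mul_le hA.card_pos, Nat.sub_mul]
  have hsplit : #{w ∈ W | a ∉ N w} * #A + #A * #{w ∈ W | a ∈ N w} = #A * #W := by
    rw [← card_filter_add_card_filter_not (s := W) (p := fun w => a ∈ N w)]; ring
  omega

theorem exists_hitting_card_le_greedyHittingBound (hk : 0 < k) (m : ℕ) (hA : #A = m)
    (hN : ∀ w ∈ W, N w ⊆ A ∧ k ≤ #(N w)) :
    ∃ D ⊆ A, (∀ w ∈ W, ∃ d ∈ D, d ∈ N w) ∧ #D ≤ greedyHittingBound k m #W := by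
  induction m generalizing A W with
  | zero =>
    refine ⟨∅, empty_subset _, fun w hw => ?_, by simp⟩
    have := card_le_card (hN w hw).1
    have := (hN w hw).2
    omega
  | succ m ih =>
    rcases W.eq_empty_or_nonempty with rfl | ⟨w₀, hw₀⟩
    · exact ⟨∅, empty_subset _, by simp, by simp⟩
    have hAne : A.Nonempty := card_pos.mp (by omega)
    rcases Nat.lt_or_ge k (m + 1) with hkm | hkm
    · obtain ⟨a, haA, hrest⟩ := exists_mem_card_filter_notMem_le hAne hN
      rw [hA] at hrest
      obtain ⟨D, hDA, hDhit, hDcard⟩ :=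
        ih (A := A.erase a) (W := {w ∈ W | a ∉ N w}) (by rw [card_erase_of_mem haA, hA]; rfl)
          fun w hw => ⟨fun x hx => mem_erase.mpr ⟨fun hxa => (mem_filter.mp hw).2 (hxa ▸ hx),
            (hN w (mem_filter.mp hw).1).1 hx⟩, (hN w (mem_filter.mp hw).1).2⟩
      refine ⟨insert a D, insert_subset haA (hDA.trans (erase_subset a A)), fun w hw => ?_, ?_⟩
      · by_cases haw : a ∈ N w
        · exact ⟨a, mem_insert_self a D, haw⟩
        · obtain ⟨d, hd, hdw⟩ := hDhit w (mem_filter.mpr ⟨hw, haw⟩)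
          exact ⟨d, mem_insert_of_mem hd, hdw⟩
      · rw [greedyHittingBound.succ_of_lt (card_ne_zero_of_mem hw₀) hkm]
        have := hDcard.trans (greedyHittingBound.mono k m hrest)
        have := card_insert_le a D
        omega
    · have hNA : ∀ w ∈ W, N w = A := fun w hw =>
        eq_of_subset_of_card_le (hN w hw).1 (by have := (hN w hw).2; omega)
      obtain ⟨a, ha⟩ := hAne
      refine ⟨{a}, singleton_subset_iff.mpr ha,
        fun w hw => ⟨a, mem_singleton_self a, (hNA w hw) ▸ ha⟩, ?_⟩
      simp [greedyHittingBound, card_ne_zero_of_mem hw₀, hkm]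

end HittingSet

section TropicalDomination

variable {V C : Type*} {col : V → C}

theorem IsTropical.mono {S T : Finset V} (h : IsTropical col S) (hST : S ⊆ T) :
    IsTropical col T := fun ch =>
  let ⟨v, hv, hvc⟩ := h ch
  ⟨v, hST hv, hvc⟩

theorem IsTropical.card_le [Fintype C] {S : Finset V} (h : IsTropical col S) :
    Fintype.card C ≤ #S := by
  classical
  calc Fintype.card C = #(univ : Finset C) := card_univ.symm
    _ ≤ #(S.image col) := card_le_card fun ch _ => by
      obtain ⟨v, hv, rfl⟩ := h ch
      exact mem_image_of_mem col hv
    _ ≤ #S := card_image_le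

theorem exists_isTropical_card_eq [Fintype C] (hsurj : Function.Surjective col) :
    ∃ R : Finset V, IsTropical col R ∧ #R = Fintype.card C := by
  classical
  obtain ⟨g, hg⟩ := hsurj.hasRightInverse
  refine ⟨univ.image g, fun ch => ⟨g ch, mem_image_of_mem g (mem_univ ch), hg ch⟩, ?_⟩
  rw [card_image_of_injective _ hg.injective, card_univ]

theorem tropDomNum_le {G : SimpleGraph V} {S : Finset V} (hdom : IsDomSet G S)
    (htrop : IsTropical col S) : tropDomNum G col ≤ #S :=
  Nat.sInf_le ⟨S, hdom, htrop, rfl⟩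

theorem card_le_tropDomNum [Fintype V] [Fintype C] (G : SimpleGraph V)
    (hsurj : Function.Surjective col) : Fintype.card C ≤ tropDomNum G col :=
  le_csInf ⟨_, univ, fun v => Or.inl (mem_univ v),
      fun ch => (hsurj ch).elim fun v hv => ⟨v, mem_univ v, hv⟩, rfl⟩
    fun _ ⟨_, _, htrop, hS⟩ => hS ▸ htrop.card_le

theorem exists_isDomSet_union_card_le [Fintype V] [DecidableEq V] {G : SimpleGraph V}
    [DecidableRel G.Adj] (hδ : 9 ≤ G.minDegree) (R : Finset V) :
    IsDomSet G R ∨ ∃ D, IsDomSet G (R ∪ D) ∧ 3 * #D + 2 ≤ Fintype.card V - #R := by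
  by_cases hR : IsDomSet G R
  · exact Or.inl hR
  right
  set W := ({v | ¬(v ∈ R ∨ ∃ u ∈ R, G.Adj u v)} : Finset V)
  set N := fun v => insert v (G.neighborFinset v)
  have hN : ∀ w ∈ W, N w ⊆ Rᶜ ∧ 10 ≤ #(N w) := by
    intro w hw
    simp only [W, mem_filter, mem_univ, true_and, not_or, not_exists, not_and] at hw
    refine ⟨fun x hx => mem_compl.mpr ?_, ?_⟩
    · rcases mem_insert.mp hx with rfl | hx
      · exact hw.1
      · exact fun hxR => hw.2 x hxR ((G.mem_neighborFinset w x).mp hx).symm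
    · rw [card_insert_of_notMem (by simp), G.card_neighborFinset_eq_degree]
      have := G.minDegree_le_degree w
      omega
  obtain ⟨D, -, hDhit, hDcard⟩ :=
    exists_hitting_card_le_greedyHittingBound (k := 10) (by norm_num) _ rfl hN
  refine ⟨D, fun v => ?_, ?_⟩
  · by_cases hv : v ∈ R ∨ ∃ u ∈ R, G.Adj u v
    · rcases hv with hv | ⟨u, hu, huv⟩
      · exact Or.inl (mem_union_left D hv)
      · exact Or.inr ⟨u, mem_union_left D hu, huv⟩
    · obtain ⟨d, hd, hdv⟩ := hDhit v (by simpa [W] using hv)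
      rcases mem_insert.mp hdv with rfl | hdv
      · exact Or.inl (mem_union_right R hd)
      · exact Or.inr ⟨d, mem_union_right R hd, ((G.mem_neighborFinset v d).mp hdv).symm⟩
  · obtain ⟨w, hw⟩ : W.Nonempty := by
      simp only [IsDomSet, not_forall] at hR
      obtain ⟨v, hv⟩ := hR
      exact ⟨v, by simpa [W] using hv⟩
    have hWR : #W ≤ #Rᶜ := card_le_card fun w hw => (hN w hw).1 (mem_insert_self w _)
    have hR10 : 10 ≤ #Rᶜ := (hN w hw).2.trans (card_le_card (hN w hw).1)
    rw [← card_compl]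
    have := greedyHittingBound.three_mul_ten_add_two_le hR10 hWR
    omega

end TropicalDomination

theorem tropDomNum_lt_of_minDegree_ge_nine_general
    {V C : Type*} [Fintype V] [Fintype C] (G : SimpleGraph V) [DecidableRel G.Adj]
    (col : V → C) (hsurj : Function.Surjective col)
    (n c : ℕ) (hn : Fintype.card V = n) (hc : Fintype.card C = c)
    (hδ : 9 ≤ G.minDegree) :
    tropDomNum G col = c ∨
      (tropDomNum G col : ℝ) <
        (G.minDegree : ℝ) * ((n : ℝ) - (c : ℝ) + 1) / (3 * (G.minDegree : ℝ) - 1)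
          + (c : ℝ) - 1 := by
  classical
  subst hn hc
  obtain ⟨R, hRtrop, hRcard⟩ := exists_isTropical_card_eq hsurj
  have hlower := card_le_tropDomNum G hsurj
  rcases exists_isDomSet_union_card_le hδ R with hdom | ⟨D, hdom, hD⟩
  · exact Or.inl (le_antisymm (hRcard ▸ tropDomNum_le hdom hRtrop) hlower)
  right
  have hupper : (tropDomNum G col : ℝ) ≤ Fintype.card C + #D := by
    exact_mod_cast (tropDomNum_le hdom (hRtrop.mono subset_union_left)).trans
      (hRcard ▸ card_union_le R D)
  set x : ℝ := Fintype.card V - Fintype.card C + 1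
  have hx : 3 * (#D : ℝ) + 3 ≤ x := by
    have : ((3 * #D + 2 + Fintype.card C : ℕ) : ℝ) ≤ Fintype.card V := by
      exact_mod_cast (by omega : 3 * #D + 2 + Fintype.card C ≤ Fintype.card V)
    push_cast at this
    linarith
  have hδr : (9 : ℝ) ≤ G.minDegree := by exact_mod_cast hδ
  have hthird : x / 3 < G.minDegree * x / (3 * G.minDegree - 1) := by
    rw [div_lt_div_iff₀ (by norm_num) (by linarith)]
    nlinarith
  linarith

/-- for a connected vertex-coloured graph with minimum degree `δ ≥ 9`,
either `γᵗ(G^c) = c` or `γᵗ(G^c) < δ·(n - c + 1)/(3δ - 1) + c - 1`. -/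
theorem tropDomNum_lt_of_minDegree_ge_nine
    {V C : Type*} [Fintype V] [Fintype C] (G : SimpleGraph V) [DecidableRel G.Adj]
    (hconn : G.Connected)
    (col : V → C) (hsurj : Function.Surjective col)
    (n c : ℕ) (hn : Fintype.card V = n) (hc : Fintype.card C = c)
    (hδ : 9 ≤ G.minDegree) :
    tropDomNum G col = c ∨
      (tropDomNum G col : ℝ) <
        (G.minDegree : ℝ) * ((n : ℝ) - (c : ℝ) + 1) / (3 * (G.minDegree : ℝ) - 1)
          + (c : ℝ) - 1 :=
  tropDomNum_lt_of_minDegree_ge_nine_general G col hsurj n c hn hc hδ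
end
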